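/- Define F₁(1,ℓ) = 2ℓ²[(1 + ℓ²/4)Φ(−ℓ/2) − (ℓ/(2√(2π))) exp(−ℓ²/8)] for ℓ ≥ 0. At any critical point ℓ of F₁(1,·), the second derivative satisfies ∂²F₁/∂ℓ²(1,ℓ) = (ℓ² − 6)Φ(−ℓ/2); consequently every local maximum lies in (0, √6], every local minimum in [√6, ∞), and F₁(1,·) admits a unique local maximum on (0,∞), which is its global maximum. -/

import Mathlib

open Real Set

noncomputable def Phi (x : ℝ) : ℝ :=
  (Real.sqrt (2 * Real.pi))⁻¹ * ∫ y in Set.Iic x, Real.exp (-y ^ 2 / 2)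

/-- `F₁(1,ℓ) = 2ℓ²[(1 + ℓ²/4)Φ(−ℓ/2) − (ℓ/(2√(2π))) e^{−ℓ²/8}]`. -/
noncomputable def F1one (ℓ : ℝ) : ℝ :=
  2 * ℓ ^ 2 * ((1 + ℓ ^ 2 / 4) * Phi (-ℓ / 2)
    - ℓ / (2 * Real.sqrt (2 * Real.pi)) * Real.exp (-ℓ ^ 2 / 8))

/-!
With `φ` the standard normal density, `F₁' = (4ℓ + 2ℓ³)Φ(−ℓ/2) − 4ℓ²φ(ℓ/2)` and
`F₁'' = (4 + 6ℓ²)Φ(−ℓ/2) − 10ℓφ(ℓ/2)`; eliminating `φ(ℓ/2)` with `F₁' = 0` leaves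
`F₁'' = (ℓ² − 6)Φ(−ℓ/2)` at a critical point. Since `Φ > 0`, a critical point beyond `√6` cannot
be a local maximum and one below `√6` cannot be a local minimum. Two local maxima `a < b ≤ √6`
would force a local minimum of `F₁` inside `(a, b)`, below `√6`; so there is at most one.
A global maximum on `(0, ∞)` exists because `F₁` is positive near `0` and, by Mills' ratio bound,
tends to `0` at infinity; it is therefore the unique local maximum.
-/

open MeasureTheory Filter Topology

lemma not_isLocalMax_of_deriv_deriv_pos {f : ℝ → ℝ} {x₀ : ℝ} (hf : Differentiable ℝ f)
    (hd : deriv f x₀ = 0) (h2 : 0 < deriv (deriv f) x₀) : ¬ IsLocalMax f x₀ := by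
  intro hmax
  have hpos : ∀ᶠ x in 𝓝[>] x₀, 0 < deriv f x := deriv_pos_right_of_sign_deriv
    (nhdsWithin_le_nhds (eventually_nhdsWithin_sign_eq_of_deriv_pos h2 hd))
  obtain ⟨b, hb, hsub⟩ := mem_nhdsGT_iff_exists_Ioo_subset.1 hpos
  have hmono : StrictMonoOn f (Ico x₀ b) :=
    strictMonoOn_of_deriv_pos (convex_Ico x₀ b) hf.continuous.continuousOn
      fun x hx => hsub (by rwa [interior_Ico] at hx)
  obtain ⟨x, hx, hxb⟩ :=
    ((hmax.filter_mono nhdsWithin_le_nhds).and (Ioo_mem_nhdsGT hb)).exists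
  exact (hmono ⟨le_rfl, hb⟩ (Ioo_subset_Ico_self hxb) hxb.1).not_ge hx

lemma not_isLocalMin_of_deriv_deriv_neg {f : ℝ → ℝ} {x₀ : ℝ} (hf : Differentiable ℝ f)
    (hd : deriv f x₀ = 0) (h2 : deriv (deriv f) x₀ < 0) : ¬ IsLocalMin f x₀ := fun hmin =>
  not_isLocalMax_of_deriv_deriv_pos (f := -f) hf.neg (by simpa [deriv.neg'] using hd)
    (by simpa [deriv.neg'] using h2) hmin.neg

lemma exists_isLocalMin_mem_Ioo_of_isLocalMax {f : ℝ → ℝ} {a b : ℝ} (hab : a < b)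
    (hf : ContinuousOn f (Icc a b)) (ha : IsLocalMax f a) (hb : IsLocalMax f b) :
    ∃ c ∈ Ioo a b, IsLocalMin f c := by
  suffices ∃ c ∈ Ioo a b, IsMinOn f (Icc a b) c by
    obtain ⟨c, hc, hmin⟩ := this
    exact ⟨c, hc, hmin.isLocalMin (Icc_mem_nhds hc.1 hc.2)⟩
  obtain ⟨m, hm, hmin⟩ := isCompact_Icc.exists_isMinOn (nonempty_Icc.2 hab.le) hf
  -- If the minimum sits at an endpoint, the local maximum there forces nearby interior minima.
  obtain ⟨s, hsa, hs⟩ := ((ha.filter_mono nhdsWithin_le_nhds).and (Ioo_mem_nhdsGT hab)).exists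
  obtain ⟨t, htb, ht⟩ := ((hb.filter_mono nhdsWithin_le_nhds).and (Ioo_mem_nhdsLT hab)).exists
  rcases hm.1.eq_or_lt with rfl | ham
  · exact ⟨s, hs, isMinOn_iff.2 fun x hx => hsa.trans (hmin hx)⟩
  rcases hm.2.eq_or_lt with rfl | hmb
  · exact ⟨t, ht, isMinOn_iff.2 fun x hx => htb.trans (hmin hx)⟩
  exact ⟨m, ⟨ham, hmb⟩, hmin⟩

noncomputable def phi (x : ℝ) : ℝ :=
  (√(2 * π))⁻¹ * exp (-x ^ 2 / 2)

lemma phi_neg (x : ℝ) : phi (-x) = phi x := by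
  simp only [phi, neg_sq]

lemma hasDerivAt_exp_neg_sq_div_two (x : ℝ) :
    HasDerivAt (fun y : ℝ => exp (-y ^ 2 / 2)) (-x * exp (-x ^ 2 / 2)) x := by
  have h : HasDerivAt (fun y : ℝ => -y ^ 2 / 2) (-x) x := by
    refine ((hasDerivAt_pow 2 x).neg.div_const 2).congr_deriv ?_; ring
  exact h.exp.congr_deriv (mul_comm _ _)

lemma hasDerivAt_phi (x : ℝ) : HasDerivAt phi (-x * phi x) x := by
  refine HasDerivAt.congr_deriv (f := phi) ((hasDerivAt_exp_neg_sq_div_two x).const_mul _) ?_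
  unfold phi; ring

lemma integrable_exp_neg_sq_div_two : Integrable fun y : ℝ => exp (-y ^ 2 / 2) := by
  simpa [div_eq_inv_mul] using integrable_exp_neg_mul_sq (b := 2⁻¹) (by norm_num)

lemma hasDerivAt_Phi (x : ℝ) : HasDerivAt Phi (phi x) x := by
  have hcont : Continuous fun y : ℝ => exp (-y ^ 2 / 2) := by fun_prop
  have hPhi : Phi = fun x => (√(2 * π))⁻¹ *
      ((∫ y in Iic 0, exp (-y ^ 2 / 2)) + ∫ y in (0 : ℝ)..x, exp (-y ^ 2 / 2)) := by
    funext t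
    rw [← intervalIntegral.integral_Iic_sub_Iic integrable_exp_neg_sq_div_two.integrableOn
      integrable_exp_neg_sq_div_two.integrableOn, add_sub_cancel, Phi]
  rw [hPhi]
  exact (((hcont.integral_hasStrictDerivAt 0 x).hasDerivAt).const_add _).const_mul _

lemma continuous_Phi : Continuous Phi :=
  continuous_iff_continuousAt.2 fun x => (hasDerivAt_Phi x).continuousAt

lemma Phi_pos (x : ℝ) : 0 < Phi x := by
  refine mul_pos (by positivity) ?_
  rw [setIntegral_pos_iff_support_of_nonneg_ae
    (Eventually.of_forall fun y => (exp_pos _).le) integrable_exp_neg_sq_div_two.integrableOn]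
  simp [Function.support, exp_ne_zero]

lemma Phi_neg_le_phi_div {x : ℝ} (hx : 0 < x) : Phi (-x) ≤ phi x / x := by
  have hderiv : ∀ y ∈ Iic (-x),
      HasDerivAt (fun y : ℝ => exp (-y ^ 2 / 2)) (-y * exp (-y ^ 2 / 2)) y :=
    fun y _ => hasDerivAt_exp_neg_sq_div_two y
  have hint : Integrable fun y : ℝ => -y * exp (-y ^ 2 / 2) := by
    simpa [div_eq_inv_mul] using (integrable_mul_exp_neg_mul_sq (b := 2⁻¹) (by norm_num)).neg
  have htend : Tendsto (fun y : ℝ => exp (-y ^ 2 / 2)) atBot (𝓝 0) :=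
    tendsto_zero_of_hasDerivAt_of_integrableOn_Iic hderiv hint.integrableOn
      integrable_exp_neg_sq_div_two.integrableOn
  have hFTC : ∫ y in Iic (-x), -y * exp (-y ^ 2 / 2) = exp (-x ^ 2 / 2) := by
    rw [integral_Iic_of_hasDerivAt_of_tendsto' hderiv hint.integrableOn htend]
    simp
  have hmono : ∫ y in Iic (-x), exp (-y ^ 2 / 2) ≤
      ∫ y in Iic (-x), x⁻¹ * (-y * exp (-y ^ 2 / 2)) := by
    refine setIntegral_mono_on integrable_exp_neg_sq_div_two.integrableOn
      (hint.const_mul _).integrableOn measurableSet_Iic fun y hy => ?_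
    rw [← mul_assoc]
    refine le_mul_of_one_le_left (exp_pos _).le ?_
    rw [mem_Iic] at hy
    rw [inv_mul_eq_div, one_le_div hx]
    linarith
  rw [integral_const_mul, hFTC] at hmono
  unfold Phi phi
  rw [mul_div_assoc]
  gcongr
  rwa [div_eq_inv_mul]

lemma F1one_eq (ℓ : ℝ) :
    F1one ℓ = (2 * ℓ ^ 2 + ℓ ^ 4 / 2) * Phi (-ℓ / 2) - ℓ ^ 3 * phi (ℓ / 2) := by
  simp only [F1one, phi]
  field_simp
  ring_nf

noncomputable def F1oneDeriv (ℓ : ℝ) : ℝ :=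
  (4 * ℓ + 2 * ℓ ^ 3) * Phi (-ℓ / 2) - 4 * ℓ ^ 2 * phi (ℓ / 2)

noncomputable def F1oneDeriv2 (ℓ : ℝ) : ℝ :=
  (4 + 6 * ℓ ^ 2) * Phi (-ℓ / 2) - 10 * ℓ * phi (ℓ / 2)

lemma hasDerivAt_Phi_neg_half (ℓ : ℝ) :
    HasDerivAt (fun x => Phi (-x / 2)) (-phi (ℓ / 2) / 2) ℓ := by
  have h := (hasDerivAt_Phi (-ℓ / 2)).comp ℓ ((hasDerivAt_id ℓ).neg.div_const 2)
  refine h.congr_deriv ?_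
  rw [neg_div, phi_neg]
  ring

lemma hasDerivAt_phi_half (ℓ : ℝ) :
    HasDerivAt (fun x => phi (x / 2)) (-(ℓ / 4) * phi (ℓ / 2)) ℓ := by
  refine ((hasDerivAt_phi (ℓ / 2)).comp ℓ ((hasDerivAt_id ℓ).div_const 2)).congr_deriv ?_
  ring

lemma hasDerivAt_F1one (ℓ : ℝ) : HasDerivAt F1one (F1oneDeriv ℓ) ℓ := by
  have h1 : HasDerivAt (fun x : ℝ => 2 * x ^ 2 + x ^ 4 / 2) (4 * ℓ + 2 * ℓ ^ 3) ℓ := by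
    refine (((hasDerivAt_pow 2 ℓ).const_mul 2).add
      ((hasDerivAt_pow 4 ℓ).div_const 2)).congr_deriv ?_
    ring
  have h2 := (hasDerivAt_pow 3 ℓ).mul (hasDerivAt_phi_half ℓ)
  rw [show F1one = _ from funext F1one_eq]
  refine ((h1.mul (hasDerivAt_Phi_neg_half ℓ)).sub h2).congr_deriv ?_
  simp only [F1oneDeriv]; ring

lemma hasDerivAt_F1oneDeriv (ℓ : ℝ) : HasDerivAt F1oneDeriv (F1oneDeriv2 ℓ) ℓ := by
  have h1 : HasDerivAt (fun x : ℝ => 4 * x + 2 * x ^ 3) (4 + 6 * ℓ ^ 2) ℓ := by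
    refine (((hasDerivAt_id ℓ).const_mul 4).add
      ((hasDerivAt_pow 3 ℓ).const_mul 2)).congr_deriv ?_
    ring
  have h2 := ((hasDerivAt_pow 2 ℓ).const_mul 4).mul (hasDerivAt_phi_half ℓ)
  refine ((h1.mul (hasDerivAt_Phi_neg_half ℓ)).sub h2).congr_deriv ?_
  simp only [F1oneDeriv2]; ring

lemma deriv_F1one : deriv F1one = F1oneDeriv :=
  funext fun ℓ => (hasDerivAt_F1one ℓ).deriv

lemma deriv_deriv_F1one : deriv (deriv F1one) = F1oneDeriv2 := by
  rw [deriv_F1one]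
  exact funext fun ℓ => (hasDerivAt_F1oneDeriv ℓ).deriv

lemma differentiable_F1one : Differentiable ℝ F1one :=
  fun ℓ => (hasDerivAt_F1one ℓ).differentiableAt

lemma continuous_F1one : Continuous F1one :=
  differentiable_F1one.continuous

lemma F1oneDeriv2_eq_of_F1oneDeriv_eq_zero {ℓ : ℝ} (hℓ : ℓ ≠ 0) (h : F1oneDeriv ℓ = 0) :
    F1oneDeriv2 ℓ = (ℓ ^ 2 - 6) * Phi (-ℓ / 2) := by
  unfold F1oneDeriv at h
  unfold F1oneDeriv2
  apply mul_left_cancel₀ (mul_ne_zero four_ne_zero hℓ)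
  linear_combination 10 * h

lemma le_sqrt_six_of_isLocalMax {ℓ : ℝ} (hℓ : 0 < ℓ) (h : IsLocalMax F1one ℓ) : ℓ ≤ √6 := by
  by_contra! hlt
  have hd : deriv F1one ℓ = 0 := h.deriv_eq_zero
  refine not_isLocalMax_of_deriv_deriv_pos differentiable_F1one hd ?_ h
  rw [deriv_deriv_F1one, F1oneDeriv2_eq_of_F1oneDeriv_eq_zero hℓ.ne' (deriv_F1one ▸ hd)]
  exact mul_pos (sub_pos.2 ((sqrt_lt' hℓ).1 hlt)) (Phi_pos _)

lemma sqrt_six_le_of_isLocalMin {ℓ : ℝ} (hℓ : 0 < ℓ) (h : IsLocalMin F1one ℓ) : √6 ≤ ℓ := by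
  by_contra! hlt
  have hd : deriv F1one ℓ = 0 := h.deriv_eq_zero
  refine not_isLocalMin_of_deriv_deriv_neg differentiable_F1one hd ?_ h
  rw [deriv_deriv_F1one, F1oneDeriv2_eq_of_F1oneDeriv_eq_zero hℓ.ne' (deriv_F1one ▸ hd)]
  exact mul_neg_of_neg_of_pos (sub_neg.2 ((lt_sqrt hℓ.le).1 hlt)) (Phi_pos _)

lemma eq_of_isLocalMax_F1one {a b : ℝ} (ha : 0 < a) (hb : 0 < b) (hma : IsLocalMax F1one a)
    (hmb : IsLocalMax F1one b) : a = b := by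
  wlog hab : a < b generalizing a b
  · rcases (not_lt.1 hab).eq_or_lt with h | h
    · exact h.symm
    · exact (this hb ha hmb hma h).symm
  obtain ⟨c, hc, hmin⟩ :=
    exists_isLocalMin_mem_Ioo_of_isLocalMax hab continuous_F1one.continuousOn hma hmb
  linarith [hc.2, sqrt_six_le_of_isLocalMin (ha.trans hc.1) hmin, le_sqrt_six_of_isLocalMax hb hmb]

/-- Near `0`, `F₁(1,ℓ) ≈ 2ℓ²Φ(0)`. -/
lemma exists_F1one_pos : ∃ ℓ, 0 < ℓ ∧ 0 < F1one ℓ := by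
  set B : ℝ → ℝ := fun ℓ => (1 + ℓ ^ 2 / 4) * Phi (-ℓ / 2)
    - ℓ / (2 * √(2 * π)) * exp (-ℓ ^ 2 / 8) with hB
  have hcont : Continuous B := by
    have := continuous_Phi
    fun_prop
  have hlim : Tendsto B (𝓝[>] 0) (𝓝 (Phi 0)) := by
    simpa [hB] using hcont.continuousAt.tendsto.mono_left (nhdsWithin_le_nhds (a := 0))
  obtain ⟨ℓ, hBℓ, hℓ⟩ :=
    ((hlim.eventually (lt_mem_nhds (Phi_pos 0))).and self_mem_nhdsWithin).exists
  exact ⟨ℓ, hℓ, mul_pos (by positivity) hBℓ⟩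

/-- Mills' bound `Φ(−ℓ/2) ≤ 2φ(ℓ/2)/ℓ` cancels the `ℓ⁴` and `ℓ³` terms of `F₁`. -/
lemma F1one_le_four_mul_phi_half {x : ℝ} (hx : 0 ≤ x) : F1one x ≤ 4 * x * phi (x / 2) := by
  rcases hx.eq_or_lt with rfl | hx
  · simp [F1one]
  have hmills := mul_le_mul_of_nonneg_left (Phi_neg_le_phi_div (half_pos hx))
    (by positivity : (0 : ℝ) ≤ 2 * x ^ 2 + x ^ 4 / 2)
  rw [show (2 * x ^ 2 + x ^ 4 / 2) * (phi (x / 2) / (x / 2)) = (4 * x + x ^ 3) * phi (x / 2) by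
    field_simp; ring] at hmills
  rw [F1one_eq, neg_div]
  linarith

lemma tendsto_abs_mul_phi_half_cocompact :
    Tendsto (fun x => |x| * phi (x / 2)) (cocompact ℝ) (𝓝 0) := by
  have h := (tendsto_rpow_abs_mul_exp_neg_mul_sq_cocompact (a := 1 / 8) (by norm_num) 1).const_mul
    (√(2 * π))⁻¹
  rw [mul_zero] at h
  refine h.congr fun x => ?_
  simp only [rpow_one, phi]
  ring_nf

lemma exists_isMaxOn_F1one : ∃ ℓ, 0 < ℓ ∧ IsMaxOn F1one (Ioi 0) ℓ := by
  obtain ⟨ℓ₀, hℓ₀, hF⟩ := exists_F1one_pos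
  have hc : ∀ᶠ x in cocompact ℝ ⊓ 𝓟 (Ici 0), F1one x ≤ F1one ℓ₀ := by
    have h := (tendsto_abs_mul_phi_half_cocompact.const_mul 4).eventually
      (gt_mem_nhds (by linarith : 4 * 0 < F1one ℓ₀))
    filter_upwards [mem_inf_of_left h, mem_inf_of_right (mem_principal_self _)] with x hx hx0
    rw [mem_Ici] at hx0
    rw [abs_of_nonneg hx0, ← mul_assoc] at hx
    exact (F1one_le_four_mul_phi_half hx0).trans hx.le
  obtain ⟨ℓ, hℓ, hmax⟩ := continuous_F1one.continuousOn.exists_isMaxOn' isClosed_Ici hℓ₀.le hc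
  refine ⟨ℓ, (mem_Ici.1 hℓ).lt_of_ne ?_, hmax.on_subset Ioi_subset_Ici_self⟩
  rintro rfl
  have h0 : F1one 0 = 0 := by simp [F1one]
  linarith [isMaxOn_iff.1 hmax ℓ₀ hℓ₀.le]

/-- At any critical point of `F₁(1,·)`, the second derivative equals `(ℓ² − 6)Φ(−ℓ/2)`;
every local maximum lies in `(0,√6]`, every local minimum in `[√6,∞)`, and `F₁(1,·)` admits a
unique local maximum on `(0,∞)`, which is a global maximum there. -/
theorem F1_one_unique_max :
    (∀ ℓ : ℝ, 0 < ℓ → deriv F1one ℓ = 0 →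
      iteratedDeriv 2 F1one ℓ = (ℓ ^ 2 - 6) * Phi (-ℓ / 2)) ∧
    (∀ ℓ : ℝ, 0 < ℓ → IsLocalMax F1one ℓ → ℓ ≤ Real.sqrt 6) ∧
    (∀ ℓ : ℝ, 0 < ℓ → IsLocalMin F1one ℓ → Real.sqrt 6 ≤ ℓ) ∧
    (∃! ℓstar : ℝ, 0 < ℓstar ∧ IsLocalMax F1one ℓstar) ∧
    (∀ ℓstar : ℝ, 0 < ℓstar → IsLocalMax F1one ℓstar → IsMaxOn F1one (Set.Ioi 0) ℓstar) := by
  obtain ⟨ℓs, hpos, hmax⟩ := exists_isMaxOn_F1one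
  have hloc : IsLocalMax F1one ℓs := hmax.isLocalMax (Ioi_mem_nhds hpos)
  refine ⟨fun ℓ hℓ hd => ?_, fun _ => le_sqrt_six_of_isLocalMax,
    fun _ => sqrt_six_le_of_isLocalMin,
    ⟨ℓs, ⟨hpos, hloc⟩, fun ℓ h => eq_of_isLocalMax_F1one h.1 hpos h.2 hloc⟩,
    fun ℓ hℓ h => eq_of_isLocalMax_F1one hpos hℓ hloc h ▸ hmax⟩
  rw [iteratedDeriv_succ, iteratedDeriv_one, deriv_deriv_F1one]
  exact F1oneDeriv2_eq_of_F1oneDeriv_eq_zero hℓ.ne' (deriv_F1one ▸ hd)
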